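/- arXiv:1803.00120 — 8 statements merged into one kernel-verified Lean document; each statement's English description precedes it below -/
import Mathlib

section
/- Let N ≥ 1, let E be an N×N real diagonal matrix with strictly positive diagonal entries Eᵢᵢ = |eᵢ|, let M be an N×3 real matrix with MᵗEM invertible, let n₁,…,n_N ∈ ℝ² be vectors, and let |T| > 0, h > 0, κ > 0 be real numbers. Define α(u) := (MᵗEM)⁻¹MᵗE u, the residual r(u) := u − M α(u), the matrices A := E − EM(MᵗEM)⁻¹MᵗE and B with entries b_{ij} := (nᵢ·n_j)|eᵢ||e_j|/|T|, the stabilizer S_T(u,w) := h⁻¹ ∑ᵢ |eᵢ| r(u)ᵢ r(w)ᵢ, and the weak gradients ∇_w u := (1/|T|) ∑ᵢ uᵢ |eᵢ| nᵢ ∈ ℝ². Then for all u, w ∈ ℝᴺ: κ S_T(u,w) + |T| (∇_w u)·(∇_w w) = uᵗ (κ h⁻¹ A + B) w. -/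
open Matrix

/-- Element stiffness matrix formula (Theorem 3.1) for the simplified weak Galerkin method on
an `N`-sided polygonal element `T`: with edge lengths `e i`, outward unit normals `nv i ∈ ℝ²`,
area `|T| = area`, element diameter `h`, stabilization parameter `κ`,
least-squares extension coefficients `α(u) = (MᵀEM)⁻¹MᵀE u` (with `E = diagonal e`),
stabilizer `S_T(u,w) = h⁻¹ ∑ i, e i * (u − Mα(u))ᵢ (w − Mα(w))ᵢ` and weak gradients
`∇_w u = (1/|T|) ∑ i, uᵢ eᵢ nᵢ`, one has
`κ S_T(u,w) + |T| (∇_w u)·(∇_w w) = uᵗ (κ h⁻¹ A + B) w`, where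
`A = E − EM(MᵀEM)⁻¹MᵀE` and `B i j = (nᵢ·nⱼ) eᵢ eⱼ / |T|`. -/
theorem stmt2 (N : ℕ) (hN : 1 ≤ N) (e : Fin N → ℝ) (he : ∀ i, 0 < e i)
    (M : Matrix (Fin N) (Fin 3) ℝ)
    (hM : IsUnit (Mᵀ * Matrix.diagonal e * M))
    (nv : Fin N → ℝ × ℝ) (area h κ : ℝ)
    (harea : 0 < area) (hh : 0 < h) (hκ : 0 < κ)
    (u w : Fin N → ℝ) :
    κ * (h⁻¹ * ∑ i, e i *
          ((u - M *ᵥ ((Mᵀ * Matrix.diagonal e * M)⁻¹ *ᵥ ((Mᵀ * Matrix.diagonal e) *ᵥ u))) i) *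
          ((w - M *ᵥ ((Mᵀ * Matrix.diagonal e * M)⁻¹ *ᵥ ((Mᵀ * Matrix.diagonal e) *ᵥ w))) i))
      + area *
        ((area⁻¹ * ∑ i, u i * e i * (nv i).1) * (area⁻¹ * ∑ i, w i * e i * (nv i).1) +
         (area⁻¹ * ∑ i, u i * e i * (nv i).2) * (area⁻¹ * ∑ i, w i * e i * (nv i).2))
    = u ⬝ᵥ
        (((κ * h⁻¹) •
            (Matrix.diagonal e -
              Matrix.diagonal e * M * (Mᵀ * Matrix.diagonal e * M)⁻¹ * Mᵀ * Matrix.diagonal e) +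
          Matrix.of fun i j => ((nv i).1 * (nv j).1 + (nv i).2 * (nv j).2) * e i * e j / area)
          *ᵥ w) := by
  set E := Matrix.diagonal e with hE
  set G := Mᵀ * E * M with hG
  have hGdet : IsUnit G.det := (Matrix.isUnit_iff_isUnit_det G).mp hM
  have hGt : Gᵀ = G := by
    rw [hG, transpose_mul, transpose_mul, transpose_transpose, Matrix.diagonal_transpose,
      Matrix.mul_assoc]
  set P := M * (G⁻¹ * (Mᵀ * E)) with hP
  have hPt : Pᵀ = E * M * G⁻¹ * Mᵀ := by
    rw [hP, transpose_mul, transpose_mul, transpose_mul, Matrix.diagonal_transpose,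
      Matrix.transpose_nonsing_inv, hGt, transpose_transpose, ← hE]
  have hPP : P * P = P := by
    rw [hP]
    calc M * (G⁻¹ * (Mᵀ * E)) * (M * (G⁻¹ * (Mᵀ * E)))
        = M * (G⁻¹ * (G * (G⁻¹ * (Mᵀ * E)))) := by rw [hG]; simp only [Matrix.mul_assoc]
      _ = M * (G⁻¹ * (Mᵀ * E)) := by
          rw [Matrix.mul_nonsing_inv_cancel_left _ _ hGdet]
  have hPtE : Pᵀ * E = E * P := by
    rw [hPt, hP]; simp only [Matrix.mul_assoc]
  have key : (1 - P)ᵀ * (E * (1 - P)) = E - E * M * G⁻¹ * Mᵀ * E := by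
    have : (1 - P)ᵀ * (E * (1 - P)) = E - E * P - (Pᵀ * E - Pᵀ * E * P) := by
      rw [transpose_sub, transpose_one]; noncomm_ring
    rw [this, hPtE, Matrix.mul_assoc E P P, hPP, sub_self, sub_zero, ← hPtE, hPt]
  have hstab : ∀ a b : Fin N → ℝ,
      (∑ i, e i * ((a - P *ᵥ a) i) * ((b - P *ᵥ b) i))
        = a ⬝ᵥ ((E - E * M * G⁻¹ * Mᵀ * E) *ᵥ b) := by
    intro a b
    rw [← key]
    have h1 : ∀ x : Fin N → ℝ, (1 - P) *ᵥ x = x - P *ᵥ x := by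
      intro x; rw [Matrix.sub_mulVec, Matrix.one_mulVec]
    calc ∑ i, e i * ((a - P *ᵥ a) i) * ((b - P *ᵥ b) i)
        = ((1 - P) *ᵥ a) ⬝ᵥ (E *ᵥ ((1 - P) *ᵥ b)) := by
          rw [h1, h1, dotProduct]
          refine Finset.sum_congr rfl fun i _ => ?_
          rw [hE, Matrix.mulVec_diagonal]
          ring
      _ = ((1 - P) *ᵥ a) ⬝ᵥ ((E * (1 - P)) *ᵥ b) := by rw [Matrix.mulVec_mulVec]
      _ = a ⬝ᵥ (((1 - P)ᵀ * (E * (1 - P))) *ᵥ b) := by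
          rw [Matrix.dotProduct_mulVec a, ← Matrix.vecMul_vecMul,
            Matrix.vecMul_transpose, ← Matrix.dotProduct_mulVec]
  have hA0 : area ≠ 0 := ne_of_gt harea
  have hBpart : area *
        ((area⁻¹ * ∑ i, u i * e i * (nv i).1) * (area⁻¹ * ∑ i, w i * e i * (nv i).1) +
         (area⁻¹ * ∑ i, u i * e i * (nv i).2) * (area⁻¹ * ∑ i, w i * e i * (nv i).2))
      = u ⬝ᵥ ((Matrix.of fun i j =>
          ((nv i).1 * (nv j).1 + (nv i).2 * (nv j).2) * e i * e j / area) *ᵥ w) := by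
    have step : area *
        ((area⁻¹ * ∑ i, u i * e i * (nv i).1) * (area⁻¹ * ∑ i, w i * e i * (nv i).1) +
         (area⁻¹ * ∑ i, u i * e i * (nv i).2) * (area⁻¹ * ∑ i, w i * e i * (nv i).2))
      = area⁻¹ * ((∑ i, u i * e i * (nv i).1) * (∑ i, w i * e i * (nv i).1) +
                  (∑ i, u i * e i * (nv i).2) * (∑ i, w i * e i * (nv i).2)) := by
      field_simp
    rw [step, Finset.sum_mul_sum, Finset.sum_mul_sum, ← Finset.sum_add_distrib,
      Finset.mul_sum]
    simp only [dotProduct, Matrix.mulVec, Matrix.of_apply, dotProduct, Finset.mul_sum]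
    refine Finset.sum_congr rfl fun i _ => ?_
    rw [← Finset.sum_add_distrib, Finset.mul_sum]
    refine Finset.sum_congr rfl fun j _ => ?_
    field_simp
  have hmv : ∀ x : Fin N → ℝ,
      M *ᵥ (G⁻¹ *ᵥ ((Mᵀ * E) *ᵥ x)) = P *ᵥ x := by
    intro x
    rw [Matrix.mulVec_mulVec, Matrix.mulVec_mulVec, hP, Matrix.mul_assoc]
  rw [hmv, hmv, Matrix.add_mulVec, dotProduct_add, Matrix.smul_mulVec,
    dotProduct_smul, ← hBpart, hstab u w, smul_eq_mul]
  ring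
end

section
/- Let P₁,…,P_N ∈ ℝ² with the convention P_{N+1} = P₁, let R : ℝ² → ℝ² be the rotation R(x,y) = (y, −x), and let ℓ : ℝ² → ℝ be an affine map, ℓ(z) = c + L·z with c ∈ ℝ and L ∈ ℝ². Then ∑_{i=1}^{N} ℓ((Pᵢ + P_{i+1})/2) · R(P_{i+1} − Pᵢ) = A · L, where A = (1/2) ∑_{i=1}^{N} (xᵢ y_{i+1} − x_{i+1} yᵢ) is the shoelace signed area of the polygon with vertices P₁,…,P_N. -/
private lemma shift_sum {n : ℕ} (f : Fin (n + 1) → ℝ × ℝ) :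
    ∑ i : Fin (n + 1), f (i + 1) = ∑ i : Fin (n + 1), f i :=
  Fintype.sum_equiv (Equiv.addRight 1) (fun i => f (i + 1)) f (fun _ => rfl)

/-- Consistency of the weak gradient on polygons: for vertices `P₁,…,P_N` (cyclically indexed
by `Fin (n+1)`, so `N = n + 1 ≥ 1`), the rotation `R(x,y) = (y,−x)` applied to the edge vectors,
and any affine map `ℓ(z) = c + L·z`, one has
`∑ i, ℓ((Pᵢ + Pᵢ₊₁)/2) • R(Pᵢ₊₁ − Pᵢ) = A • L` where `A` is the shoelace signed area. -/
theorem stmt4 (n : ℕ) (P : Fin (n + 1) → ℝ × ℝ) (c : ℝ) (L : ℝ × ℝ) :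
    (∑ i : Fin (n + 1),
        (c + L.1 * (((1 : ℝ) / 2) • (P i + P (i + 1))).1 +
            L.2 * (((1 : ℝ) / 2) • (P i + P (i + 1))).2) •
          (((P (i + 1)).2 - (P i).2, -((P (i + 1)).1 - (P i).1)) : ℝ × ℝ))
      = (((1 : ℝ) / 2) *
          ∑ i : Fin (n + 1), ((P i).1 * (P (i + 1)).2 - (P (i + 1)).1 * (P i).2)) • L := by
  set h : Fin (n + 1) → ℝ × ℝ := fun i =>
    (c * (P i).2 + L.1 / 2 * (P i).1 * (P i).2 + L.2 / 2 * (P i).2 ^ 2,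
     -(c * (P i).1) - L.2 / 2 * (P i).1 * (P i).2 - L.1 / 2 * (P i).1 ^ 2) with hh
  have key : ∀ i : Fin (n + 1),
      (c + L.1 * (((1 : ℝ) / 2) • (P i + P (i + 1))).1 +
            L.2 * (((1 : ℝ) / 2) • (P i + P (i + 1))).2) •
          (((P (i + 1)).2 - (P i).2, -((P (i + 1)).1 - (P i).1)) : ℝ × ℝ)
        = (((1 : ℝ) / 2) * ((P i).1 * (P (i + 1)).2 - (P (i + 1)).1 * (P i).2)) • L
            + (h (i + 1) - h i) := by
    intro i
    apply Prod.ext <;>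
      simp only [hh, Prod.smul_fst, Prod.smul_snd, Prod.fst_add, Prod.snd_add,
        Prod.fst_sub, Prod.snd_sub, smul_eq_mul] <;> ring
  rw [Finset.sum_congr rfl (fun i _ => key i), Finset.sum_add_distrib,
    Finset.sum_sub_distrib, shift_sum, sub_self, add_zero, ← Finset.sum_smul, ← Finset.mul_sum]
end

section
/- Let a, b > 0 and (x_T, y_T) ∈ ℝ², and consider the rectangle with vertical edges e₁ (left) and e₂ (right) of length a and horizontal edges e₃ (bottom) and e₄ (top) of length b, with edge midpoints M₁ = (x_T − b/2, y_T), M₂ = (x_T + b/2, y_T), M₃ = (x_T, y_T − a/2), M₄ = (x_T, y_T + a/2) and edge lengths |e₁| = |e₂| = a, |e₃| = |e₄| = b. Given v₁, v₂, v₃, v₄ ∈ ℝ, the unique affine function s(x,y) = α₀ + α₁(x − x_T) + α₂(y − y_T) satisfying ∑_{i=1}^{4} (s(Mᵢ) − vᵢ) φ(Mᵢ) |eᵢ| = 0 for every affine function φ has coefficients α₀ = (a(v₁+v₂) + b(v₃+v₄))/(2a + 2b), α₁ = (v₂ − v₁)/b, α₂ = (v₄ − v₃)/a. -/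
/-- The affine function `α₀ + α₁(x − x_T) + α₂(y − y_T)` evaluated at a point `p ∈ ℝ²`. -/
def affineFn (α0 α1 α2 xT yT : ℝ) (p : ℝ × ℝ) : ℝ :=
  α0 + α1 * (p.1 - xT) + α2 * (p.2 - yT)

/-- Explicit formula for the weak Galerkin least-squares affine extension on a rectangle of
width `b` and height `a` centered at `(xT, yT)`: the affine function
`s = α₀ + α₁(x − x_T) + α₂(y − y_T)` satisfies the weighted orthogonality condition
`∑ᵢ (s(Mᵢ) − vᵢ) φ(Mᵢ) |eᵢ| = 0` for every affine `φ` if and only if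
`α₀ = (a(v₁+v₂)+b(v₃+v₄))/(2a+2b)`, `α₁ = (v₂−v₁)/b`, `α₂ = (v₄−v₃)/a`. -/
theorem stmt5 (a b xT yT : ℝ) (ha : 0 < a) (hb : 0 < b)
    (v1 v2 v3 v4 α0 α1 α2 : ℝ) :
    (∀ β0 β1 β2 : ℝ,
        (affineFn α0 α1 α2 xT yT (xT - b / 2, yT) - v1) *
            affineFn β0 β1 β2 xT yT (xT - b / 2, yT) * a +
          (affineFn α0 α1 α2 xT yT (xT + b / 2, yT) - v2) *
            affineFn β0 β1 β2 xT yT (xT + b / 2, yT) * a +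
          (affineFn α0 α1 α2 xT yT (xT, yT - a / 2) - v3) *
            affineFn β0 β1 β2 xT yT (xT, yT - a / 2) * b +
          (affineFn α0 α1 α2 xT yT (xT, yT + a / 2) - v4) *
            affineFn β0 β1 β2 xT yT (xT, yT + a / 2) * b = 0)
      ↔ (α0 = (a * (v1 + v2) + b * (v3 + v4)) / (2 * a + 2 * b) ∧
          α1 = (v2 - v1) / b ∧ α2 = (v4 - v3) / a) := by
  have ha' := ha.ne'
  have hb' := hb.ne'
  have hab : 2 * a + 2 * b ≠ 0 := by positivity
  constructor
  · intro h
    have h1 := h 1 0 0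
    have h2 := h 0 1 0
    have h3 := h 0 0 1
    simp only [affineFn] at h1 h2 h3
    refine ⟨?_, ?_, ?_⟩
    · ring_nf at h1
      field_simp
      linarith
    · have h2' : a * (b * (α1 * b + v1 - v2)) = 0 := by
        ring_nf at h2 ⊢
        linear_combination 2 * h2
      have := (mul_eq_zero.1 h2').resolve_left ha'
      have := (mul_eq_zero.1 this).resolve_left hb'
      field_simp
      linarith
    · have h3' : b * (a * (α2 * a + v3 - v4)) = 0 := by
        ring_nf at h3 ⊢
        linear_combination 2 * h3
      have := (mul_eq_zero.1 h3').resolve_left hb'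
      have := (mul_eq_zero.1 this).resolve_left ha'
      field_simp
      linarith
  · rintro ⟨h0, h1, h2⟩ β0 β1 β2
    subst h0 h1 h2
    simp only [affineFn]
    ring_nf
    field_simp
    ring
end

section
/- Let a, b > 0 and consider a rectangle of width b and height a centered at (x_T,y_T), with left, right, bottom, top edge midpoints M₁ = (x_T − b/2, y_T), M₂ = (x_T + b/2, y_T), M₃ = (x_T, y_T − a/2), M₄ = (x_T, y_T + a/2) and edge lengths |e₁| = |e₂| = a, |e₃| = |e₄| = b. For data v₁,…,v₄ ∈ ℝ let s be the affine function with ∑_{i=1}^{4}(s(Mᵢ) − vᵢ)φ(Mᵢ)|eᵢ| = 0 for every affine φ. Then s(M₁) − v₁ = s(M₂) − v₂ = (b/(2(a+b)))(v₃ + v₄ − v₁ − v₂), s(M₃) − v₃ = s(M₄) − v₄ = −(a/(2(a+b)))(v₃ + v₄ − v₁ − v₂), and consequently a·(s(M₁) − v₁) = −b·(s(M₃) − v₃). -/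
/-- Residual identities for the weak Galerkin affine extension on a rectangle of width `b`
and height `a` centered at `(xT, yT)`: if `s` satisfies the orthogonality condition
`∑ᵢ(s(Mᵢ) − vᵢ)φ(Mᵢ)|eᵢ| = 0` for all affine `φ`, then
`s(M₁) − v₁ = s(M₂) − v₂ = (b/(2(a+b)))(v₃+v₄−v₁−v₂)`,
`s(M₃) − v₃ = s(M₄) − v₄ = −(a/(2(a+b)))(v₃+v₄−v₁−v₂)`, and
`a(s(M₁) − v₁) = −b(s(M₃) − v₃)`. -/
theorem stmt6 (a b xT yT : ℝ) (ha : 0 < a) (hb : 0 < b)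
    (v1 v2 v3 v4 α0 α1 α2 : ℝ)
    (horth : ∀ β0 β1 β2 : ℝ,
        (affineFn α0 α1 α2 xT yT (xT - b / 2, yT) - v1) *
            affineFn β0 β1 β2 xT yT (xT - b / 2, yT) * a +
          (affineFn α0 α1 α2 xT yT (xT + b / 2, yT) - v2) *
            affineFn β0 β1 β2 xT yT (xT + b / 2, yT) * a +
          (affineFn α0 α1 α2 xT yT (xT, yT - a / 2) - v3) *
            affineFn β0 β1 β2 xT yT (xT, yT - a / 2) * b +
          (affineFn α0 α1 α2 xT yT (xT, yT + a / 2) - v4) *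
            affineFn β0 β1 β2 xT yT (xT, yT + a / 2) * b = 0) :
    affineFn α0 α1 α2 xT yT (xT - b / 2, yT) - v1 =
        affineFn α0 α1 α2 xT yT (xT + b / 2, yT) - v2 ∧
    affineFn α0 α1 α2 xT yT (xT - b / 2, yT) - v1 =
        b / (2 * (a + b)) * (v3 + v4 - v1 - v2) ∧
    affineFn α0 α1 α2 xT yT (xT, yT - a / 2) - v3 =
        affineFn α0 α1 α2 xT yT (xT, yT + a / 2) - v4 ∧
    affineFn α0 α1 α2 xT yT (xT, yT - a / 2) - v3 =
        -(a / (2 * (a + b))) * (v3 + v4 - v1 - v2) ∧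
    a * (affineFn α0 α1 α2 xT yT (xT - b / 2, yT) - v1) =
        -(b * (affineFn α0 α1 α2 xT yT (xT, yT - a / 2) - v3)) := by
  have h1 := horth 1 0 0
  have hx := horth 0 1 0
  have hy := horth 0 0 1
  simp only [affineFn] at h1 hx hy ⊢
  have hab : (2 : ℝ) * (a + b) ≠ 0 := by positivity
  have hx' : α1 * b = v2 - v1 := by
    have h := mul_ne_zero (mul_ne_zero (ne_of_gt ha) (ne_of_gt hb)) (two_ne_zero (α := ℝ))
    apply mul_left_cancel₀ (show a * b / 2 ≠ 0 by positivity)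
    ring_nf
    ring_nf at hx
    linarith
  have hy' : α2 * a = v4 - v3 := by
    apply mul_left_cancel₀ (show a * b / 2 ≠ 0 by positivity)
    ring_nf
    ring_nf at hy
    linarith
  have h1' : α0 * b * 2 + α0 * a * 2 - b * v3 - b * v4 - v1 * a - a * v2 = 0 := by
    ring_nf at h1 ⊢
    linarith
  have key2 : (α0 + α1 * (xT - b / 2 - xT) + α2 * (yT - yT) - v1) * (2 * (a + b)) =
      b * (v3 + v4 - v1 - v2) := by
    linear_combination h1' - (a + b) * hx'
  have key4 : (α0 + α1 * (xT - xT) + α2 * (yT - a / 2 - yT) - v3) * (2 * (a + b)) =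
      -(a * (v3 + v4 - v1 - v2)) := by
    linear_combination h1' - (a + b) * hy'
  have eq2 : α0 + α1 * (xT - b / 2 - xT) + α2 * (yT - yT) - v1 =
      b * (v3 + v4 - v1 - v2) / (2 * (a + b)) := by
    rw [eq_div_iff hab]; exact key2
  have eq4 : α0 + α1 * (xT - xT) + α2 * (yT - a / 2 - yT) - v3 =
      -(a * (v3 + v4 - v1 - v2)) / (2 * (a + b)) := by
    rw [eq_div_iff hab]; exact key4
  refine ⟨by linear_combination -hx', by linear_combination eq2,
    by linear_combination -hy', by linear_combination eq4,
    by linear_combination a * eq2 + b * eq4⟩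
end

section
/- Let a, b > 0 and consider a rectangle T of width b and height a with area |T| = ab, edge midpoints M₁ (left), M₂ (right), M₃ (bottom), M₄ (top), edge lengths |e₁| = |e₂| = a, |e₃| = |e₄| = b, and outward unit normals n₁ = (−1,0), n₂ = (1,0), n₃ = (0,−1), n₄ = (0,1). For boundary data v₁,…,v₄ ∈ ℝ, let s be the least-squares affine extension (the affine function with ∑ᵢ(s(Mᵢ) − vᵢ)φ(Mᵢ)|eᵢ| = 0 for every affine φ) and let ∇_w v := (1/|T|) ∑_{i=1}^{4} vᵢ |eᵢ| nᵢ be the weak gradient. Then the (constant) gradient of s equals the weak gradient: ∇s = ((v₂ − v₁)/b, (v₄ − v₃)/a) = ∇_w v. In particular ‖∇s‖ = ‖∇_w v‖. -/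
/-- On a rectangle `T` of width `b`, height `a`, area `ab`, with outward unit normals
`n₁ = (−1,0)`, `n₂ = (1,0)`, `n₃ = (0,−1)`, `n₄ = (0,1)`, the (constant) gradient `(α₁, α₂)`
of the least-squares affine extension `s` of boundary data `v₁,…,v₄` equals
`((v₂ − v₁)/b, (v₄ − v₃)/a)`, which is exactly the weak gradient
`∇_w v = (1/|T|) ∑ᵢ vᵢ |eᵢ| nᵢ`; in particular `‖∇s‖ = ‖∇_w v‖`. -/
theorem stmt7 (a b xT yT : ℝ) (ha : 0 < a) (hb : 0 < b)
    (v1 v2 v3 v4 α0 α1 α2 : ℝ)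
    (horth : ∀ β0 β1 β2 : ℝ,
        (affineFn α0 α1 α2 xT yT (xT - b / 2, yT) - v1) *
            affineFn β0 β1 β2 xT yT (xT - b / 2, yT) * a +
          (affineFn α0 α1 α2 xT yT (xT + b / 2, yT) - v2) *
            affineFn β0 β1 β2 xT yT (xT + b / 2, yT) * a +
          (affineFn α0 α1 α2 xT yT (xT, yT - a / 2) - v3) *
            affineFn β0 β1 β2 xT yT (xT, yT - a / 2) * b +
          (affineFn α0 α1 α2 xT yT (xT, yT + a / 2) - v4) *
            affineFn β0 β1 β2 xT yT (xT, yT + a / 2) * b = 0) :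
    ((α1, α2) : ℝ × ℝ) = ((v2 - v1) / b, (v4 - v3) / a) ∧
    ((α1, α2) : ℝ × ℝ) =
      (1 / (a * b)) •
        ((v1 * a) • ((-1, 0) : ℝ × ℝ) + (v2 * a) • ((1, 0) : ℝ × ℝ) +
          (v3 * b) • ((0, -1) : ℝ × ℝ) + (v4 * b) • ((0, 1) : ℝ × ℝ)) ∧
    ‖((α1, α2) : ℝ × ℝ)‖ =
      ‖(1 / (a * b)) •
        ((v1 * a) • ((-1, 0) : ℝ × ℝ) + (v2 * a) • ((1, 0) : ℝ × ℝ) +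
          (v3 * b) • ((0, -1) : ℝ × ℝ) + (v4 * b) • ((0, 1) : ℝ × ℝ))‖ := by
  have h1 := horth 0 1 0
  have h2 := horth 0 0 1
  simp only [affineFn] at h1 h2
  have hab : a * b ≠ 0 := by positivity
  have ha1 : α1 = (v2 - v1) / b := by
    have h1' : a * b * (α1 * b - (v2 - v1)) = 0 := by linear_combination 2 * h1
    field_simp
    rcases mul_eq_zero.mp h1' with h | h
    · exact absurd h hab
    · linarith
  have ha2 : α2 = (v4 - v3) / a := by
    have h2' : a * b * (α2 * a - (v4 - v3)) = 0 := by linear_combination 2 * h2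
    field_simp
    rcases mul_eq_zero.mp h2' with h | h
    · exact absurd h hab
    · linarith
  have key : ((α1, α2) : ℝ × ℝ) =
      (1 / (a * b)) •
        ((v1 * a) • ((-1, 0) : ℝ × ℝ) + (v2 * a) • ((1, 0) : ℝ × ℝ) +
          (v3 * b) • ((0, -1) : ℝ × ℝ) + (v4 * b) • ((0, 1) : ℝ × ℝ)) := by
    simp only [Prod.smul_mk, Prod.mk_add_mk, Prod.mk.injEq, smul_eq_mul]
    constructor
    · rw [ha1]; field_simp; ring
    · rw [ha2]; field_simp; ring
  exact ⟨by rw [ha1, ha2], key, by rw [key]⟩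
end

section
/- Let h > 0, κ > 0, and consider a square element T of side h with area |T| = h², edge midpoints M₁ (left), M₂ (right), M₃ (bottom), M₄ (top), all edge lengths equal to h, and outward unit normals n₁ = (−1,0), n₂ = (1,0), n₃ = (0,−1), n₄ = (0,1). For boundary data u = (u₁,…,u₄) ∈ ℝ⁴ let s(u) be its least-squares affine extension, let S_T(u,w) := h⁻¹ ∑ᵢ h (uᵢ − s(u)(Mᵢ))(wᵢ − s(w)(Mᵢ)), let ∇_w u := (1/|T|)∑ᵢ uᵢ h nᵢ, and for vector data (u,v) with components uᵢ, vᵢ let the weak divergence be ∇_w·(u,v) := (1/|T|)∑ᵢ (uᵢ, vᵢ)·nᵢ h. Then for the basis data w = (1,0,0,0) (associated with edge e₁) and any p ∈ ℝ: κ S_T(u,w) + |T|(∇_w u)·(∇_w w) − |T| p · (∇_w·(w, 0)) = (κ/4)(u₁ + u₂ − u₃ − u₄) + u₁ − u₂ + h p, and |T| ∇_w·(u,v) = h(u₂ − u₁) + h(v₄ − v₃). -/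
/-- The weak gradient `∇_w u = (1/|T|) ∑ᵢ uᵢ |eᵢ| nᵢ` on a square element of side `h`
(area `h²`), normals `n₁ = (−1,0)`, `n₂ = (1,0)`, `n₃ = (0,−1)`, `n₄ = (0,1)`. -/
noncomputable def weakGradSq (h u1 u2 u3 u4 : ℝ) : ℝ × ℝ :=
  (1 / h ^ 2) •
    ((u1 * h) • ((-1, 0) : ℝ × ℝ) + (u2 * h) • ((1, 0) : ℝ × ℝ) +
      (u3 * h) • ((0, -1) : ℝ × ℝ) + (u4 * h) • ((0, 1) : ℝ × ℝ))

/-- The weak divergence `∇_w·(u,v) = (1/|T|) ∑ᵢ (uᵢ,vᵢ)·nᵢ |eᵢ|` on a square element of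
side `h` (area `h²`), with the same outward unit normals. -/
noncomputable def weakDivSq (h u1 u2 u3 u4 v1 v2 v3 v4 : ℝ) : ℝ :=
  (1 / h ^ 2) *
    ((u1 * (-1) + v1 * 0) * h + (u2 * 1 + v2 * 0) * h +
      (u3 * 0 + v3 * (-1)) * h + (u4 * 0 + v4 * 1) * h)

/-- Local element equation of the simplified weak Galerkin scheme for the Stokes equation on
a square element of side `h` with stabilization parameter `κ`, tested against the velocity
basis data `w = (1,0,0,0)` supported on the left edge `e₁`:
`κ S_T(u,w) + |T|(∇_w u)·(∇_w w) − |T| p ∇_w·(w,0) = (κ/4)(u₁+u₂−u₃−u₄) + u₁ − u₂ + h p`,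
together with the local mass-conservation identity
`|T| ∇_w·(u,v) = h(u₂ − u₁) + h(v₄ − v₃)`. -/
theorem stmt10 (h κ xT yT : ℝ) (hh : 0 < h) (hκ : 0 < κ)
    (sw0 sw1 sw2 : ℝ)
    (hsw : ∀ β0 β1 β2 : ℝ,
        (affineFn sw0 sw1 sw2 xT yT (xT - h / 2, yT) - 1) *
            affineFn β0 β1 β2 xT yT (xT - h / 2, yT) * h +
          (affineFn sw0 sw1 sw2 xT yT (xT + h / 2, yT) - 0) *
            affineFn β0 β1 β2 xT yT (xT + h / 2, yT) * h +
          (affineFn sw0 sw1 sw2 xT yT (xT, yT - h / 2) - 0) *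
            affineFn β0 β1 β2 xT yT (xT, yT - h / 2) * h +
          (affineFn sw0 sw1 sw2 xT yT (xT, yT + h / 2) - 0) *
            affineFn β0 β1 β2 xT yT (xT, yT + h / 2) * h = 0)
    (u1 u2 u3 u4 su0 su1 su2 : ℝ)
    (hsu : ∀ β0 β1 β2 : ℝ,
        (affineFn su0 su1 su2 xT yT (xT - h / 2, yT) - u1) *
            affineFn β0 β1 β2 xT yT (xT - h / 2, yT) * h +
          (affineFn su0 su1 su2 xT yT (xT + h / 2, yT) - u2) *
            affineFn β0 β1 β2 xT yT (xT + h / 2, yT) * h +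
          (affineFn su0 su1 su2 xT yT (xT, yT - h / 2) - u3) *
            affineFn β0 β1 β2 xT yT (xT, yT - h / 2) * h +
          (affineFn su0 su1 su2 xT yT (xT, yT + h / 2) - u4) *
            affineFn β0 β1 β2 xT yT (xT, yT + h / 2) * h = 0)
    (v1 v2 v3 v4 p : ℝ) :
    κ * (h⁻¹ *
          (h * (u1 - affineFn su0 su1 su2 xT yT (xT - h / 2, yT)) *
              (1 - affineFn sw0 sw1 sw2 xT yT (xT - h / 2, yT)) +
            h * (u2 - affineFn su0 su1 su2 xT yT (xT + h / 2, yT)) *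
              (0 - affineFn sw0 sw1 sw2 xT yT (xT + h / 2, yT)) +
            h * (u3 - affineFn su0 su1 su2 xT yT (xT, yT - h / 2)) *
              (0 - affineFn sw0 sw1 sw2 xT yT (xT, yT - h / 2)) +
            h * (u4 - affineFn su0 su1 su2 xT yT (xT, yT + h / 2)) *
              (0 - affineFn sw0 sw1 sw2 xT yT (xT, yT + h / 2))))
        + h ^ 2 *
            ((weakGradSq h u1 u2 u3 u4).1 * (weakGradSq h 1 0 0 0).1 +
              (weakGradSq h u1 u2 u3 u4).2 * (weakGradSq h 1 0 0 0).2)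
        - h ^ 2 * p * weakDivSq h 1 0 0 0 0 0 0 0
      = κ / 4 * (u1 + u2 - u3 - u4) + u1 - u2 + h * p ∧
    h ^ 2 * weakDivSq h u1 u2 u3 u4 v1 v2 v3 v4 = h * (u2 - u1) + h * (v4 - v3) := by
  have hne : h ≠ 0 := ne_of_gt hh
  have h2ne : (h:ℝ)^2 ≠ 0 := pow_ne_zero 2 hne
  -- extract least-squares equations for su
  have eu0 := hsu 1 0 0
  have eu1 := hsu 0 1 0
  have eu2 := hsu 0 0 1
  have ew0 := hsw 1 0 0
  have ew1 := hsw 0 1 0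
  have ew2 := hsw 0 0 1
  simp only [affineFn] at eu0 eu1 eu2 ew0 ew1 ew2
  have hsu0 : su0 = (u1 + u2 + u3 + u4) / 4 := by
    have h' : su0 * h = ((u1 + u2 + u3 + u4) / 4) * h := by linear_combination (1/4) * eu0
    exact mul_right_cancel₀ hne h'
  have hsu1 : su1 = (u2 - u1) / h := by
    rw [eq_div_iff hne]
    have h' : (su1 * h) * h ^ 2 = (u2 - u1) * h ^ 2 := by linear_combination 2 * eu1
    exact mul_right_cancel₀ h2ne h'
  have hsu2 : su2 = (u4 - u3) / h := by
    rw [eq_div_iff hne]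
    have h' : (su2 * h) * h ^ 2 = (u4 - u3) * h ^ 2 := by linear_combination 2 * eu2
    exact mul_right_cancel₀ h2ne h'
  have hsw0 : sw0 = 1 / 4 := by
    have h' : sw0 * h = (1/4 : ℝ) * h := by linear_combination (1/4) * ew0
    exact mul_right_cancel₀ hne h'
  have hsw1 : sw1 = (-1) / h := by
    rw [eq_div_iff hne]
    have h' : (sw1 * h) * h ^ 2 = (-1) * h ^ 2 := by linear_combination 2 * ew1
    exact mul_right_cancel₀ h2ne h'
  have hsw2 : sw2 = 0 := by
    have h' : sw2 * h ^ 3 = 0 * h ^ 3 := by linear_combination 2 * ew2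
    exact mul_right_cancel₀ (pow_ne_zero 3 hne) h'
  subst hsu0 hsu1 hsu2 hsw0 hsw1 hsw2
  constructor
  · simp only [affineFn, weakGradSq, weakDivSq, Prod.smul_mk, Prod.mk_add_mk, smul_eq_mul]
    field_simp
    ring
  · simp only [weakDivSq]
    field_simp
    ring
end

section
/- For every h > 0, every x ∈ ℝ, and every function f : ℝ → ℝ that is twice continuously differentiable on [x − h/2, x + 3h/2] with |f''| ≤ K there, one has |−f(x − h/2) + 4f(x) + 6f(x + h/2) + 4f(x + h) − f(x + 3h/2) − 12 f(x + h/2)| ≤ 2 K h². -/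
/-!
With `s = h/2` and the symmetric second difference `Δ²f(y) = f(y + s) + f(y - s) - 2 f(y)`,
the quantity to be bounded equals `2 Δ²f(x + h/2) - Δ²f(x) - Δ²f(x + h)`. Each second difference
is at most `2 K s²` in absolute value, so the total is at most `8 K s² = 2 K h²`. The bound on
`Δ²f(y)` holds because `t ↦ Δ²_t f(y)` has derivative `f'(y + t) - f'(y - t)`, and `f'` is
`K`-Lipschitz by the mean value theorem.
-/

open Set

theorem Convex.norm_derivWithin_sub_le_of_norm_iteratedDerivWithin_two_le {f : ℝ → ℝ}
    {s : Set ℝ} {K : ℝ} (hs : Convex ℝ s) (hu : UniqueDiffOn ℝ s) (hf : ContDiffOn ℝ 2 f s)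
    (hK : ∀ z ∈ s, ‖iteratedDerivWithin 2 f s z‖ ≤ K) :
    ∀ u ∈ s, ∀ v ∈ s, ‖derivWithin f s u - derivWithin f s v‖ ≤ K * ‖u - v‖ := by
  have hf' : DifferentiableOn ℝ (derivWithin f s) s :=
    (hf.derivWithin hu (m := 1) (by norm_num)).differentiableOn one_ne_zero
  rw [iteratedDerivWithin_succ, iteratedDerivWithin_one] at hK
  exact fun u hu' v hv => hs.norm_image_sub_le_of_norm_derivWithin_le hf' hK hv hu'

theorem abs_second_diff_le {f f' : ℝ → ℝ} {s : Set ℝ} {K : ℝ} (hs : Convex ℝ s)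
    (hf : ∀ z ∈ s, HasDerivWithinAt f (f' z) s z)
    (hf' : ∀ u ∈ s, ∀ v ∈ s, ‖f' u - f' v‖ ≤ K * ‖u - v‖) (hK : 0 ≤ K)
    {y t : ℝ} (ht : 0 ≤ t) (hyt₁ : y - t ∈ s) (hyt₂ : y + t ∈ s) :
    |f (y + t) + f (y - t) - 2 * f y| ≤ 2 * K * t ^ 2 := by
  have hmem : ∀ τ ∈ Icc 0 t, y + τ ∈ s ∧ y - τ ∈ s := fun τ hτ =>
    ⟨hs.ordConnected.out hyt₁ hyt₂ ⟨by linarith [hτ.1, hτ.2], by linarith [hτ.2]⟩,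
      hs.ordConnected.out hyt₁ hyt₂ ⟨by linarith [hτ.2], by linarith [hτ.1, hτ.2]⟩⟩
  let ψ : ℝ → ℝ := fun τ => f (y + τ) + f (y - τ) - 2 * f y
  have hψ : ∀ τ ∈ Icc 0 t, HasDerivWithinAt ψ (f' (y + τ) - f' (y - τ)) (Icc 0 t) τ := by
    intro τ hτ
    have hplus : HasDerivWithinAt (fun τ => f (y + τ)) (f' (y + τ)) (Icc 0 t) τ := by
      simpa [Function.comp_def] using (hf _ (hmem τ hτ).1).comp τ
        ((hasDerivWithinAt_id τ _).const_add y) fun σ hσ => (hmem σ hσ).1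
    have hminus : HasDerivWithinAt (fun τ => f (y - τ)) (-f' (y - τ)) (Icc 0 t) τ := by
      simpa [Function.comp_def] using (hf _ (hmem τ hτ).2).comp τ
        ((hasDerivWithinAt_id τ _).const_sub y) fun σ hσ => (hmem σ hσ).2
    simpa [ψ, sub_eq_add_neg] using (hplus.add hminus).sub_const (2 * f y)
  have hψ' : ∀ τ ∈ Icc 0 t, ‖f' (y + τ) - f' (y - τ)‖ ≤ 2 * K * t := fun τ hτ =>
    calc ‖f' (y + τ) - f' (y - τ)‖ ≤ K * ‖(y + τ) - (y - τ)‖ :=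
          hf' _ (hmem τ hτ).1 _ (hmem τ hτ).2
      _ = 2 * K * τ := by
          rw [add_sub_sub_cancel, ← two_mul, Real.norm_eq_abs, abs_of_nonneg (by linarith [hτ.1])]
          ring
      _ ≤ 2 * K * t := by gcongr; exact hτ.2
  have hMVT := (convex_Icc 0 t).norm_image_sub_le_of_norm_hasDerivWithin_le hψ hψ'
    (left_mem_Icc.2 ht) (right_mem_Icc.2 ht)
  simp only [ψ, add_zero, sub_zero, Real.norm_eq_abs, abs_of_nonneg ht] at hMVT
  rw [show f y + f y - 2 * f y = 0 by ring, sub_zero] at hMVT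
  linarith

/-- Simpson-type five-point estimate for the load terms of the simplified weak Galerkin /
finite difference scheme: for `h > 0` and `f` twice continuously differentiable on
`[x − h/2, x + 3h/2]` with `|f''| ≤ K` there,
`|−f(x−h/2) + 4f(x) + 6f(x+h/2) + 4f(x+h) − f(x+3h/2) − 12 f(x+h/2)| ≤ 2Kh²`. -/
theorem stmt12 (h : ℝ) (hh : 0 < h) (x : ℝ) (f : ℝ → ℝ) (K : ℝ)
    (hf : ContDiffOn ℝ 2 f (Set.Icc (x - h / 2) (x + 3 * h / 2)))
    (hK : ∀ y ∈ Set.Icc (x - h / 2) (x + 3 * h / 2),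
      |iteratedDerivWithin 2 f (Set.Icc (x - h / 2) (x + 3 * h / 2)) y| ≤ K) :
    |-f (x - h / 2) + 4 * f x + 6 * f (x + h / 2) + 4 * f (x + h) - f (x + 3 * h / 2) -
        12 * f (x + h / 2)|
      ≤ 2 * K * h ^ 2 := by
  set I := Icc (x - h / 2) (x + 3 * h / 2)
  have hK₀ : 0 ≤ K := (abs_nonneg _).trans (hK x ⟨by linarith, by linarith⟩)
  have hderiv : ∀ z ∈ I, HasDerivWithinAt f (derivWithin f I z) I z := fun z hz =>
    ((hf.differentiableOn two_ne_zero) z hz).hasDerivWithinAt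
  have hlip := (convex_Icc _ _).norm_derivWithin_sub_le_of_norm_iteratedDerivWithin_two_le
    (uniqueDiffOn_Icc (by linarith)) hf hK
  have hΔ : ∀ y, y - h / 2 ∈ I → y + h / 2 ∈ I →
      |f (y + h / 2) + f (y - h / 2) - 2 * f y| ≤ 2 * K * (h / 2) ^ 2 := fun y =>
    abs_second_diff_le (convex_Icc _ _) hderiv hlip hK₀ (by linarith)
  have h₀ := hΔ x ⟨le_rfl, by linarith⟩ ⟨by linarith, by linarith⟩
  have h₁ := hΔ (x + h / 2) ⟨by linarith, by linarith⟩ ⟨by linarith, by linarith⟩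
  have h₂ := hΔ (x + h) ⟨by linarith, by linarith⟩ ⟨by linarith, by linarith⟩
  rw [show x + h / 2 + h / 2 = x + h by ring, add_sub_cancel_right] at h₁
  rw [show x + h + h / 2 = x + 3 * h / 2 by ring, show x + h - h / 2 = x + h / 2 by ring] at h₂
  rw [abs_le] at h₀ h₁ h₂ ⊢
  constructor <;> linarith [h₀.1, h₀.2, h₁.1, h₁.2, h₂.1, h₂.2]
end

section
/- Let n ≥ 2 and h = 1/n. Consider real unknowns u and v defined at the vertical-edge midpoints indexed (i+1/2, j) for i = 0,…,n, j = 1,…,n and at the horizontal-edge midpoints indexed (i, j+1/2) for i = 1,…,n, j = 0,…,n, and real unknowns p defined at the cell indices (i,j) for i,j = 1,…,n. Suppose: (boundary) u and v vanish at all boundary midpoints, i.e., at (1/2, j), (n+1/2, j), (i, 1/2) and (i, n+1/2); (momentum, vertical edges) for all i = 1,…,n−1 and j = 1,…,n: 4u_{i+1/2,j} − u_{i+1,j−1/2} − u_{i+1,j+1/2} − u_{i,j−1/2} − u_{i,j+1/2} + h(p_{i+1,j} − p_{i,j}) = 0 and 4v_{i+1/2,j} − v_{i+1,j−1/2} − v_{i+1,j+1/2}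 − v_{i,j−1/2} − v_{i,j+1/2} = 0; (momentum, horizontal edges) for all i = 1,…,n and j = 1,…,n−1: 4u_{i,j+1/2} − u_{i−1/2,j+1} − u_{i+1/2,j+1} − u_{i−1/2,j} − u_{i+1/2,j} = 0 and 4v_{i,j+1/2} − v_{i−1/2,j+1} − v_{i+1/2,j+1} − v_{i−1/2,j} − v_{i+1/2,j} + h(p_{i,j+1} − p_{i,j}) = 0; (continuity) for all i,j = 1,…,n: u_{i+1/2,j} − u_{i−1/2,j} + v_{i,j+1/2} − v_{i,j−1/2} = 0; and (mean-zero pressure) ∑_{i,j=1}^{n} p_{i,j} = 0. Then all u, v and p values are zero. -/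
section stmt15aux

lemma aux_sumB (K : ℕ) (a : ℕ → ℝ) (h0 : a 0 = 0) (hN : a (K+1) = 0) :
    (∑ j ∈ Finset.range (K+1), a j) + (∑ j ∈ Finset.range (K+1), a (j+1)) =
      2 * ∑ j ∈ Finset.range K, a (j+1) := by
  rw [Finset.sum_range_succ' a, Finset.sum_range_succ (fun j => a (j+1)), h0, hN]; ring

lemma aux_sumC (K : ℕ) (b X Y : ℕ → ℝ) (h0 : b 0 = 0) (hN : b (K+1) = 0) :
    (∑ i ∈ Finset.range (K+1), b i * X i) + (∑ i ∈ Finset.range (K+1), b (i+1) * Y (i+1)) =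
      ∑ i ∈ Finset.range K, b (i+1) * (X (i+1) + Y (i+1)) := by
  rw [Finset.sum_range_succ' (fun i => b i * X i),
    Finset.sum_range_succ (fun i => b (i+1) * Y (i+1)), h0, hN, zero_mul, zero_mul,
    add_zero, add_zero, ← Finset.sum_add_distrib]
  exact Finset.sum_congr rfl fun i _ => (mul_add _ _ _).symm

lemma aux_sumA (K : ℕ) (f g : ℕ → ℝ) (h0 : f 0 = 0) (hN : f (K+1) = 0) :
    ∑ i ∈ Finset.range K, f (i+1) * (g (i+1+1) - g (i+1)) =
      ∑ i ∈ Finset.range (K+1), g (i+1) * (f i - f (i+1)) := by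
  have l1 : ∑ i ∈ Finset.range (K+1), g (i+1) * f i
      = ∑ i ∈ Finset.range K, g (i+1+1) * f (i+1) := by
    rw [Finset.sum_range_succ' (fun i => g (i+1) * f i), h0, mul_zero, add_zero]
  have l2 : ∑ i ∈ Finset.range (K+1), g (i+1) * f (i+1)
      = ∑ i ∈ Finset.range K, g (i+1) * f (i+1) := by
    rw [Finset.sum_range_succ, hN, mul_zero, add_zero]
  calc ∑ i ∈ Finset.range K, f (i+1) * (g (i+1+1) - g (i+1))
      = ∑ i ∈ Finset.range K, (g (i+1+1) * f (i+1) - g (i+1) * f (i+1)) :=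
        Finset.sum_congr rfl (by intros; ring)
    _ = ∑ i ∈ Finset.range (K+1), g (i+1) * f i - ∑ i ∈ Finset.range (K+1), g (i+1) * f (i+1) := by
        rw [Finset.sum_sub_distrib, l1, l2]
    _ = ∑ i ∈ Finset.range (K+1), g (i+1) * (f i - f (i+1)) := by
        rw [← Finset.sum_sub_distrib]
        exact Finset.sum_congr rfl (by intros; ring)

lemma aux_cntA (K : ℕ) (w : ℕ → ℕ → ℝ)
    (h0 : ∀ j, j < K+1 → w 0 (j+1) = 0) (hN : ∀ j, j < K+1 → w (K+1) (j+1) = 0) :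
    (∑ j ∈ Finset.range (K+1), ∑ i ∈ Finset.range (K+1), w i (j+1)^2) +
      (∑ j ∈ Finset.range (K+1), ∑ i ∈ Finset.range (K+1), w (i+1) (j+1)^2) =
      2 * ∑ j ∈ Finset.range (K+1), ∑ i ∈ Finset.range K, w (i+1) (j+1)^2 := by
  rw [← Finset.sum_add_distrib, Finset.mul_sum]
  refine Finset.sum_congr rfl fun j hj => ?_
  exact aux_sumB K (fun i => w i (j+1)^2)
    (by show w 0 (j+1)^2 = 0; rw [h0 j (Finset.mem_range.mp hj)]; ring)
    (by show w (K+1) (j+1)^2 = 0; rw [hN j (Finset.mem_range.mp hj)]; ring)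

lemma aux_cntB (K : ℕ) (z : ℕ → ℕ → ℝ)
    (h0 : ∀ i, i < K+1 → z (i+1) 0 = 0) (hN : ∀ i, i < K+1 → z (i+1) (K+1) = 0) :
    (∑ i ∈ Finset.range (K+1), ∑ j ∈ Finset.range (K+1), z (i+1) j ^2) +
      (∑ i ∈ Finset.range (K+1), ∑ j ∈ Finset.range (K+1), z (i+1) (j+1)^2) =
      2 * ∑ i ∈ Finset.range (K+1), ∑ j ∈ Finset.range K, z (i+1) (j+1)^2 := by
  rw [← Finset.sum_add_distrib, Finset.mul_sum]
  refine Finset.sum_congr rfl fun i hi => ?_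
  exact aux_sumB K (fun j => z (i+1) j ^2)
    (by show z (i+1) 0 ^2 = 0; rw [h0 i (Finset.mem_range.mp hi)]; ring)
    (by show z (i+1) (K+1)^2 = 0; rw [hN i (Finset.mem_range.mp hi)]; ring)

lemma aux_cntE (K : ℕ) (w z : ℕ → ℕ → ℝ)
    (h0 : ∀ j, j < K+1 → w 0 (j+1) = 0) (hN : ∀ j, j < K+1 → w (K+1) (j+1) = 0) :
    (∑ j ∈ Finset.range (K+1), ∑ i ∈ Finset.range (K+1),
        w i (j+1) * (z (i+1) j + z (i+1) (j+1))) +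
      (∑ j ∈ Finset.range (K+1), ∑ i ∈ Finset.range (K+1),
        w (i+1) (j+1) * (z (i+1) j + z (i+1) (j+1))) =
      ∑ j ∈ Finset.range (K+1), ∑ i ∈ Finset.range K,
        w (i+1) (j+1) * ((z (i+1+1) j + z (i+1+1) (j+1)) + (z (i+1) j + z (i+1) (j+1))) := by
  rw [← Finset.sum_add_distrib]
  refine Finset.sum_congr rfl fun j hj => ?_
  exact aux_sumC K (fun i => w i (j+1)) (fun i => z (i+1) j + z (i+1) (j+1))
    (fun i => z i j + z i (j+1))
    (h0 j (Finset.mem_range.mp hj)) (hN j (Finset.mem_range.mp hj))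

lemma aux_cntF (K : ℕ) (w z : ℕ → ℕ → ℝ)
    (h0 : ∀ i, i < K+1 → z (i+1) 0 = 0) (hN : ∀ i, i < K+1 → z (i+1) (K+1) = 0) :
    (∑ i ∈ Finset.range (K+1), ∑ j ∈ Finset.range (K+1),
        w i (j+1) * (z (i+1) j + z (i+1) (j+1))) +
      (∑ i ∈ Finset.range (K+1), ∑ j ∈ Finset.range (K+1),
        w (i+1) (j+1) * (z (i+1) j + z (i+1) (j+1))) =
      ∑ i ∈ Finset.range (K+1), ∑ j ∈ Finset.range K,
        z (i+1) (j+1) * ((w i (j+1+1) + w i (j+1)) + (w (i+1) (j+1+1) + w (i+1) (j+1))) := by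
  rw [← Finset.sum_add_distrib]
  refine Finset.sum_congr rfl fun i hi => ?_
  have e1 : ∑ j ∈ Finset.range (K+1), w i (j+1) * (z (i+1) j + z (i+1) (j+1)) =
      ∑ j ∈ Finset.range K, z (i+1) (j+1) * (w i (j+1+1) + w i (j+1)) := by
    rw [show ∑ j ∈ Finset.range (K+1), w i (j+1) * (z (i+1) j + z (i+1) (j+1))
        = (∑ j ∈ Finset.range (K+1), z (i+1) j * w i (j+1)) +
          ∑ j ∈ Finset.range (K+1), z (i+1) (j+1) * w i (j+1) from by
      rw [← Finset.sum_add_distrib]; exact Finset.sum_congr rfl fun _ _ => by ring]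
    exact aux_sumC K (fun j => z (i+1) j) (fun j => w i (j+1)) (fun j => w i j)
      (h0 i (Finset.mem_range.mp hi)) (hN i (Finset.mem_range.mp hi))
  have e2 : ∑ j ∈ Finset.range (K+1), w (i+1) (j+1) * (z (i+1) j + z (i+1) (j+1)) =
      ∑ j ∈ Finset.range K, z (i+1) (j+1) * (w (i+1) (j+1+1) + w (i+1) (j+1)) := by
    rw [show ∑ j ∈ Finset.range (K+1), w (i+1) (j+1) * (z (i+1) j + z (i+1) (j+1))
        = (∑ j ∈ Finset.range (K+1), z (i+1) j * w (i+1) (j+1)) +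
          ∑ j ∈ Finset.range (K+1), z (i+1) (j+1) * w (i+1) (j+1) from by
      rw [← Finset.sum_add_distrib]; exact Finset.sum_congr rfl fun _ _ => by ring]
    exact aux_sumC K (fun j => z (i+1) j) (fun j => w (i+1) (j+1)) (fun j => w (i+1) j)
      (h0 i (Finset.mem_range.mp hi)) (hN i (Finset.mem_range.mp hi))
  rw [e1, e2, ← Finset.sum_add_distrib]
  exact Finset.sum_congr rfl fun _ _ => by ring

lemma aux_energy (K : ℕ) (w z g1 g2 : ℕ → ℕ → ℝ)
    (hw0 : ∀ j, j < K+1 → w 0 (j+1) = 0) (hwN : ∀ j, j < K+1 → w (K+1) (j+1) = 0)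
    (hz0 : ∀ i, i < K+1 → z (i+1) 0 = 0) (hzN : ∀ i, i < K+1 → z (i+1) (K+1) = 0)
    (hE : ∀ i j, i < K → j < K+1 →
      (z (i+1+1) j + z (i+1+1) (j+1)) + (z (i+1) j + z (i+1) (j+1)) =
        4 * w (i+1) (j+1) + g1 (i+1) (j+1))
    (hF : ∀ i j, i < K+1 → j < K →
      (w i (j+1+1) + w i (j+1)) + (w (i+1) (j+1+1) + w (i+1) (j+1)) =
        4 * z (i+1) (j+1) + g2 (i+1) (j+1)) :
    ∑ i ∈ Finset.range (K+1), ∑ j ∈ Finset.range (K+1),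
      ((w i (j+1) - z (i+1) j)^2 + (w i (j+1) - z (i+1) (j+1))^2 +
       (w (i+1) (j+1) - z (i+1) j)^2 + (w (i+1) (j+1) - z (i+1) (j+1))^2) =
    - (∑ j ∈ Finset.range (K+1), ∑ i ∈ Finset.range K, w (i+1) (j+1) * g1 (i+1) (j+1))
    - (∑ i ∈ Finset.range (K+1), ∑ j ∈ Finset.range K, z (i+1) (j+1) * g2 (i+1) (j+1)) := by
  have e1 : ∑ i ∈ Finset.range (K+1), ∑ j ∈ Finset.range (K+1),
      ((w i (j+1) - z (i+1) j)^2 + (w i (j+1) - z (i+1) (j+1))^2 +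
       (w (i+1) (j+1) - z (i+1) j)^2 + (w (i+1) (j+1) - z (i+1) (j+1))^2) =
      2 * (∑ i ∈ Finset.range (K+1), ∑ j ∈ Finset.range (K+1), w i (j+1)^2) +
      2 * (∑ i ∈ Finset.range (K+1), ∑ j ∈ Finset.range (K+1), w (i+1) (j+1)^2) +
      2 * (∑ i ∈ Finset.range (K+1), ∑ j ∈ Finset.range (K+1), z (i+1) j ^2) +
      2 * (∑ i ∈ Finset.range (K+1), ∑ j ∈ Finset.range (K+1), z (i+1) (j+1)^2) -
      2 * ((∑ i ∈ Finset.range (K+1), ∑ j ∈ Finset.range (K+1),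
              w i (j+1) * (z (i+1) j + z (i+1) (j+1))) +
           (∑ i ∈ Finset.range (K+1), ∑ j ∈ Finset.range (K+1),
              w (i+1) (j+1) * (z (i+1) j + z (i+1) (j+1)))) := by
    simp only [Finset.mul_sum, ← Finset.sum_sub_distrib, ← Finset.sum_add_distrib]
    exact Finset.sum_congr rfl fun i _ => Finset.sum_congr rfl fun j _ => by ring
  have cA1 : ∑ i ∈ Finset.range (K+1), ∑ j ∈ Finset.range (K+1), w i (j+1)^2 =
      ∑ j ∈ Finset.range (K+1), ∑ i ∈ Finset.range (K+1), w i (j+1)^2 := Finset.sum_comm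
  have cA2 : ∑ i ∈ Finset.range (K+1), ∑ j ∈ Finset.range (K+1), w (i+1) (j+1)^2 =
      ∑ j ∈ Finset.range (K+1), ∑ i ∈ Finset.range (K+1), w (i+1) (j+1)^2 := Finset.sum_comm
  have cC1 : ∑ i ∈ Finset.range (K+1), ∑ j ∈ Finset.range (K+1),
        w i (j+1) * (z (i+1) j + z (i+1) (j+1)) =
      ∑ j ∈ Finset.range (K+1), ∑ i ∈ Finset.range (K+1),
        w i (j+1) * (z (i+1) j + z (i+1) (j+1)) := Finset.sum_comm
  have cC2 : ∑ i ∈ Finset.range (K+1), ∑ j ∈ Finset.range (K+1),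
        w (i+1) (j+1) * (z (i+1) j + z (i+1) (j+1)) =
      ∑ j ∈ Finset.range (K+1), ∑ i ∈ Finset.range (K+1),
        w (i+1) (j+1) * (z (i+1) j + z (i+1) (j+1)) := Finset.sum_comm
  have tA := aux_cntA K w hw0 hwN
  have tB := aux_cntB K z hz0 hzN
  have tE := aux_cntE K w z hw0 hwN
  have tF := aux_cntF K w z hz0 hzN
  have tE' : ∑ j ∈ Finset.range (K+1), ∑ i ∈ Finset.range K,
        w (i+1) (j+1) * ((z (i+1+1) j + z (i+1+1) (j+1)) + (z (i+1) j + z (i+1) (j+1))) =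
      4 * (∑ j ∈ Finset.range (K+1), ∑ i ∈ Finset.range K, w (i+1) (j+1)^2) +
        ∑ j ∈ Finset.range (K+1), ∑ i ∈ Finset.range K, w (i+1) (j+1) * g1 (i+1) (j+1) := by
    simp only [Finset.mul_sum, ← Finset.sum_add_distrib]
    refine Finset.sum_congr rfl fun j hj => Finset.sum_congr rfl fun i hi => ?_
    rw [hE i j (Finset.mem_range.mp hi) (Finset.mem_range.mp hj)]; ring
  have tF' : ∑ i ∈ Finset.range (K+1), ∑ j ∈ Finset.range K,
        z (i+1) (j+1) * ((w i (j+1+1) + w i (j+1)) + (w (i+1) (j+1+1) + w (i+1) (j+1))) =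
      4 * (∑ i ∈ Finset.range (K+1), ∑ j ∈ Finset.range K, z (i+1) (j+1)^2) +
        ∑ i ∈ Finset.range (K+1), ∑ j ∈ Finset.range K, z (i+1) (j+1) * g2 (i+1) (j+1) := by
    simp only [Finset.mul_sum, ← Finset.sum_add_distrib]
    refine Finset.sum_congr rfl fun i hi => Finset.sum_congr rfl fun j hj => ?_
    rw [hF i j (Finset.mem_range.mp hi) (Finset.mem_range.mp hj)]; ring
  linarith [e1, cA1, cA2, cC1, cC2, tA, tB, tE, tF, tE', tF']

end stmt15aux



/-- Uniqueness (Theorem 5.4, κ = 4) for the 5-point finite difference scheme for the Stokes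
equation on the unit square with an `n × n` uniform mesh of size `h = 1/n`.

Encoding of the half-integer indices by natural numbers:
* `uv i j` and `vv i j` are the velocity components `u_{i+1/2, j}`, `v_{i+1/2, j}` at the
  vertical-edge midpoints, for `i = 0,…,n` and `j = 1,…,n` (so `uv 0 j = u_{1/2,j}` and
  `uv n j = u_{n+1/2,j}`);
* `uh i j` and `vh i j` are `u_{i, j+1/2}`, `v_{i, j+1/2}` at the horizontal-edge midpoints,
  for `i = 1,…,n` and `j = 0,…,n`;
* `p i j` is the pressure at the cell `(i,j)`, `i, j = 1,…,n`.

If the homogeneous boundary, momentum, continuity and mean-zero pressure equations hold,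
then all the unknowns vanish. -/
theorem stmt15 (n : ℕ) (hn : 2 ≤ n) (h : ℝ) (hh : h = 1 / (n : ℝ))
    (uv vv uh vh p : ℕ → ℕ → ℝ)
    -- boundary condition: u and v vanish at all boundary midpoints
    (hbdV : ∀ j, 1 ≤ j → j ≤ n →
      uv 0 j = 0 ∧ uv n j = 0 ∧ vv 0 j = 0 ∧ vv n j = 0)
    (hbdH : ∀ i, 1 ≤ i → i ≤ n →
      uh i 0 = 0 ∧ uh i n = 0 ∧ vh i 0 = 0 ∧ vh i n = 0)
    -- momentum equations at interior vertical-edge midpoints (i+1/2, j), 1 ≤ i ≤ n−1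
    (hmomV : ∀ i j, 1 ≤ i → i ≤ n - 1 → 1 ≤ j → j ≤ n →
      4 * uv i j - uh (i + 1) (j - 1) - uh (i + 1) j - uh i (j - 1) - uh i j +
          h * (p (i + 1) j - p i j) = 0 ∧
        4 * vv i j - vh (i + 1) (j - 1) - vh (i + 1) j - vh i (j - 1) - vh i j = 0)
    -- momentum equations at interior horizontal-edge midpoints (i, j+1/2), 1 ≤ j ≤ n−1
    (hmomH : ∀ i j, 1 ≤ i → i ≤ n → 1 ≤ j → j ≤ n - 1 →
      4 * uh i j - uv (i - 1) (j + 1) - uv i (j + 1) - uv (i - 1) j - uv i j = 0 ∧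
        4 * vh i j - vv (i - 1) (j + 1) - vv i (j + 1) - vv (i - 1) j - vv i j +
          h * (p i (j + 1) - p i j) = 0)
    -- continuity equation on each cell
    (hcont : ∀ i j, 1 ≤ i → i ≤ n → 1 ≤ j → j ≤ n →
      uv i j - uv (i - 1) j + vh i j - vh i (j - 1) = 0)
    -- mean-zero pressure
    (hmean : ∑ i ∈ Finset.Icc 1 n, ∑ j ∈ Finset.Icc 1 n, p i j = 0) :
    (∀ i j, i ≤ n → 1 ≤ j → j ≤ n → uv i j = 0 ∧ vv i j = 0) ∧
      (∀ i j, 1 ≤ i → i ≤ n → j ≤ n → uh i j = 0 ∧ vh i j = 0) ∧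
      (∀ i j, 1 ≤ i → i ≤ n → 1 ≤ j → j ≤ n → p i j = 0) := by
  obtain ⟨K, rfl⟩ : ∃ K, n = K + 1 := ⟨n - 1, by omega⟩
  have hne : h ≠ 0 := by rw [hh]; push_cast; positivity
  -- boundary facts
  have hb1 : ∀ j, j < K+1 → uv 0 (j+1) = 0 := fun j hj => (hbdV (j+1) (by omega) (by omega)).1
  have hb2 : ∀ j, j < K+1 → uv (K+1) (j+1) = 0 := fun j hj => (hbdV (j+1) (by omega) (by omega)).2.1
  have hb3 : ∀ j, j < K+1 → vv 0 (j+1) = 0 := fun j hj => (hbdV (j+1) (by omega) (by omega)).2.2.1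
  have hb4 : ∀ j, j < K+1 → vv (K+1) (j+1) = 0 := fun j hj => (hbdV (j+1) (by omega) (by omega)).2.2.2
  have hb5 : ∀ i, i < K+1 → uh (i+1) 0 = 0 := fun i hi => (hbdH (i+1) (by omega) (by omega)).1
  have hb6 : ∀ i, i < K+1 → uh (i+1) (K+1) = 0 := fun i hi => (hbdH (i+1) (by omega) (by omega)).2.1
  have hb7 : ∀ i, i < K+1 → vh (i+1) 0 = 0 := fun i hi => (hbdH (i+1) (by omega) (by omega)).2.2.1
  have hb8 : ∀ i, i < K+1 → vh (i+1) (K+1) = 0 := fun i hi => (hbdH (i+1) (by omega) (by omega)).2.2.2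
  -- momentum equations in solved form
  have momVu : ∀ i j, i < K → j < K+1 →
      (uh (i+1+1) j + uh (i+1+1) (j+1)) + (uh (i+1) j + uh (i+1) (j+1)) =
        4 * uv (i+1) (j+1) + h * (p (i+1+1) (j+1) - p (i+1) (j+1)) := by
    intro i j hi hj
    have H := (hmomV (i+1) (j+1) (by omega) (by omega) (by omega) (by omega)).1
    simp only [Nat.add_sub_cancel] at H
    linarith
  have momVv : ∀ i j, i < K → j < K+1 →
      (vh (i+1+1) j + vh (i+1+1) (j+1)) + (vh (i+1) j + vh (i+1) (j+1)) =
        4 * vv (i+1) (j+1) + 0 := by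
    intro i j hi hj
    have H := (hmomV (i+1) (j+1) (by omega) (by omega) (by omega) (by omega)).2
    simp only [Nat.add_sub_cancel] at H
    linarith
  have momHu : ∀ i j, i < K+1 → j < K →
      (uv i (j+1+1) + uv i (j+1)) + (uv (i+1) (j+1+1) + uv (i+1) (j+1)) =
        4 * uh (i+1) (j+1) + 0 := by
    intro i j hi hj
    have H := (hmomH (i+1) (j+1) (by omega) (by omega) (by omega) (by omega)).1
    simp only [Nat.add_sub_cancel] at H
    linarith
  have momHv : ∀ i j, i < K+1 → j < K →
      (vv i (j+1+1) + vv i (j+1)) + (vv (i+1) (j+1+1) + vv (i+1) (j+1)) =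
        4 * vh (i+1) (j+1) + h * (p (i+1) (j+1+1) - p (i+1) (j+1)) := by
    intro i j hi hj
    have H := (hmomH (i+1) (j+1) (by omega) (by omega) (by omega) (by omega)).2
    simp only [Nat.add_sub_cancel] at H
    linarith
  have cont : ∀ i j, i < K+1 → j < K+1 →
      uv (i+1) (j+1) - uv i (j+1) + vh (i+1) (j+1) - vh (i+1) j = 0 := by
    intro i j hi hj
    have H := hcont (i+1) (j+1) (by omega) (by omega) (by omega) (by omega)
    simpa only [Nat.add_sub_cancel] using H
  -- the two energy identities
  have EQu := aux_energy K uv uh (fun a b => h * (p (a+1) b - p a b)) (fun _ _ => (0:ℝ))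
    hb1 hb2 hb5 hb6 (fun i j hi hj => momVu i j hi hj) (fun i j hi hj => momHu i j hi hj)
  have EQv := aux_energy K vv vh (fun _ _ => (0:ℝ)) (fun a b => h * (p a (b+1) - p a b))
    hb3 hb4 hb7 hb8 (fun i j hi hj => momVv i j hi hj) (fun i j hi hj => momHv i j hi hj)
  simp only [mul_zero, Finset.sum_const_zero, neg_zero, sub_zero, zero_sub] at EQu EQv
  -- summation by parts
  have sbpU : ∑ j ∈ Finset.range (K+1), ∑ i ∈ Finset.range K,
        uv (i+1) (j+1) * (h * (p (i+1+1) (j+1) - p (i+1) (j+1))) =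
      h * ∑ j ∈ Finset.range (K+1), ∑ i ∈ Finset.range (K+1),
        p (i+1) (j+1) * (uv i (j+1) - uv (i+1) (j+1)) := by
    rw [Finset.mul_sum]
    refine Finset.sum_congr rfl fun j hj => ?_
    rw [show ∑ i ∈ Finset.range K, uv (i+1) (j+1) * (h * (p (i+1+1) (j+1) - p (i+1) (j+1)))
        = h * ∑ i ∈ Finset.range K, uv (i+1) (j+1) * (p (i+1+1) (j+1) - p (i+1) (j+1)) from by
      rw [Finset.mul_sum]; exact Finset.sum_congr rfl fun _ _ => by ring]
    rw [aux_sumA K (fun i => uv i (j+1)) (fun i => p i (j+1))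
      (hb1 j (Finset.mem_range.mp hj)) (hb2 j (Finset.mem_range.mp hj))]
  have sbpV : ∑ i ∈ Finset.range (K+1), ∑ j ∈ Finset.range K,
        vh (i+1) (j+1) * (h * (p (i+1) (j+1+1) - p (i+1) (j+1))) =
      h * ∑ i ∈ Finset.range (K+1), ∑ j ∈ Finset.range (K+1),
        p (i+1) (j+1) * (vh (i+1) j - vh (i+1) (j+1)) := by
    rw [Finset.mul_sum]
    refine Finset.sum_congr rfl fun i hi => ?_
    rw [show ∑ j ∈ Finset.range K, vh (i+1) (j+1) * (h * (p (i+1) (j+1+1) - p (i+1) (j+1)))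
        = h * ∑ j ∈ Finset.range K, vh (i+1) (j+1) * (p (i+1) (j+1+1) - p (i+1) (j+1)) from by
      rw [Finset.mul_sum]; exact Finset.sum_congr rfl fun _ _ => by ring]
    rw [aux_sumA K (fun j => vh (i+1) j) (fun j => p (i+1) j)
      (hb7 i (Finset.mem_range.mp hi)) (hb8 i (Finset.mem_range.mp hi))]
  have comm : ∑ j ∈ Finset.range (K+1), ∑ i ∈ Finset.range (K+1),
        p (i+1) (j+1) * (uv i (j+1) - uv (i+1) (j+1)) =
      ∑ i ∈ Finset.range (K+1), ∑ j ∈ Finset.range (K+1),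
        p (i+1) (j+1) * (uv i (j+1) - uv (i+1) (j+1)) := Finset.sum_comm
  have czero : (∑ i ∈ Finset.range (K+1), ∑ j ∈ Finset.range (K+1),
        p (i+1) (j+1) * (uv i (j+1) - uv (i+1) (j+1))) +
      (∑ i ∈ Finset.range (K+1), ∑ j ∈ Finset.range (K+1),
        p (i+1) (j+1) * (vh (i+1) j - vh (i+1) (j+1))) = 0 := by
    rw [← Finset.sum_add_distrib]
    refine Finset.sum_eq_zero fun i hi => ?_
    rw [← Finset.sum_add_distrib]
    refine Finset.sum_eq_zero fun j hj => ?_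
    rw [← mul_add, show (uv i (j+1) - uv (i+1) (j+1)) + (vh (i+1) j - vh (i+1) (j+1)) = 0 from by
      linarith [cont i j (Finset.mem_range.mp hi) (Finset.mem_range.mp hj)], mul_zero]
  -- total energy is zero
  have hQ : ∑ i ∈ Finset.range (K+1), ∑ j ∈ Finset.range (K+1),
      (((uv i (j+1) - uh (i+1) j)^2 + (uv i (j+1) - uh (i+1) (j+1))^2 +
        (uv (i+1) (j+1) - uh (i+1) j)^2 + (uv (i+1) (j+1) - uh (i+1) (j+1))^2) +
       ((vv i (j+1) - vh (i+1) j)^2 + (vv i (j+1) - vh (i+1) (j+1))^2 +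
        (vv (i+1) (j+1) - vh (i+1) j)^2 + (vv (i+1) (j+1) - vh (i+1) (j+1))^2)) = 0 := by
    have split : ∑ i ∈ Finset.range (K+1), ∑ j ∈ Finset.range (K+1),
        (((uv i (j+1) - uh (i+1) j)^2 + (uv i (j+1) - uh (i+1) (j+1))^2 +
          (uv (i+1) (j+1) - uh (i+1) j)^2 + (uv (i+1) (j+1) - uh (i+1) (j+1))^2) +
         ((vv i (j+1) - vh (i+1) j)^2 + (vv i (j+1) - vh (i+1) (j+1))^2 +
          (vv (i+1) (j+1) - vh (i+1) j)^2 + (vv (i+1) (j+1) - vh (i+1) (j+1))^2)) =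
        (∑ i ∈ Finset.range (K+1), ∑ j ∈ Finset.range (K+1),
          ((uv i (j+1) - uh (i+1) j)^2 + (uv i (j+1) - uh (i+1) (j+1))^2 +
           (uv (i+1) (j+1) - uh (i+1) j)^2 + (uv (i+1) (j+1) - uh (i+1) (j+1))^2)) +
        (∑ i ∈ Finset.range (K+1), ∑ j ∈ Finset.range (K+1),
          ((vv i (j+1) - vh (i+1) j)^2 + (vv i (j+1) - vh (i+1) (j+1))^2 +
           (vv (i+1) (j+1) - vh (i+1) j)^2 + (vv (i+1) (j+1) - vh (i+1) (j+1))^2)) := by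
      rw [← Finset.sum_add_distrib]
      exact Finset.sum_congr rfl fun i _ => Finset.sum_add_distrib
    rw [split]
    have hT : (∑ j ∈ Finset.range (K+1), ∑ i ∈ Finset.range K,
          uv (i+1) (j+1) * (h * (p (i+1+1) (j+1) - p (i+1) (j+1)))) +
        (∑ i ∈ Finset.range (K+1), ∑ j ∈ Finset.range K,
          vh (i+1) (j+1) * (h * (p (i+1) (j+1+1) - p (i+1) (j+1)))) = 0 := by
      rw [sbpU, sbpV, comm, ← mul_add, czero, mul_zero]
    linarith [EQu, EQv, hT]
  -- pointwise equalities
  have key : ∀ i, i < K+1 → ∀ j, j < K+1 →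
      (uv i (j+1) = uh (i+1) j ∧ uv i (j+1) = uh (i+1) (j+1) ∧
       uv (i+1) (j+1) = uh (i+1) j ∧ uv (i+1) (j+1) = uh (i+1) (j+1)) ∧
      (vv i (j+1) = vh (i+1) j ∧ vv i (j+1) = vh (i+1) (j+1) ∧
       vv (i+1) (j+1) = vh (i+1) j ∧ vv (i+1) (j+1) = vh (i+1) (j+1)) := by
    intro i hi j hj
    have h1 := (Finset.sum_eq_zero_iff_of_nonneg
      (fun i _ => Finset.sum_nonneg (fun j _ => by positivity))).mp hQ i (Finset.mem_range.mpr hi)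
    have q := (Finset.sum_eq_zero_iff_of_nonneg
      (fun j _ => by positivity)).mp h1 j (Finset.mem_range.mpr hj)
    have n1 := sq_nonneg (uv i (j+1) - uh (i+1) j)
    have n2 := sq_nonneg (uv i (j+1) - uh (i+1) (j+1))
    have n3 := sq_nonneg (uv (i+1) (j+1) - uh (i+1) j)
    have n4 := sq_nonneg (uv (i+1) (j+1) - uh (i+1) (j+1))
    have n5 := sq_nonneg (vv i (j+1) - vh (i+1) j)
    have n6 := sq_nonneg (vv i (j+1) - vh (i+1) (j+1))
    have n7 := sq_nonneg (vv (i+1) (j+1) - vh (i+1) j)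
    have n8 := sq_nonneg (vv (i+1) (j+1) - vh (i+1) (j+1))
    refine ⟨⟨?_, ?_, ?_, ?_⟩, ?_, ?_, ?_, ?_⟩ <;>
      exact sub_eq_zero.mp (pow_eq_zero_iff two_ne_zero |>.mp (by linarith))
  -- propagation: all edge velocities vanish
  have uhZ : ∀ i, i < K+1 → ∀ l, l ≤ K+1 → uh (i+1) l = 0 ∧ vh (i+1) l = 0 := by
    intro i
    induction i with
    | zero =>
      intro _ l hl
      cases l with
      | zero =>
        constructor
        · rw [← (key 0 (by omega) 0 (by omega)).1.1]; exact hb1 0 (by omega)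
        · rw [← (key 0 (by omega) 0 (by omega)).2.1]; exact hb3 0 (by omega)
      | succ l' =>
        constructor
        · rw [← (key 0 (by omega) l' (by omega)).1.2.1]; exact hb1 l' (by omega)
        · rw [← (key 0 (by omega) l' (by omega)).2.2.1]; exact hb3 l' (by omega)
    | succ i ih =>
      intro hi l hl
      have IH := ih (by omega)
      cases l with
      | zero =>
        constructor
        · rw [← (key (i+1) hi 0 (by omega)).1.1, (key i (by omega) 0 (by omega)).1.2.2.2]
          exact (IH 1 (by omega)).1
        · rw [← (key (i+1) hi 0 (by omega)).2.1, (key i (by omega) 0 (by omega)).2.2.2.2]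
          exact (IH 1 (by omega)).2
      | succ l' =>
        constructor
        · rw [← (key (i+1) hi l' (by omega)).1.2.1, (key i (by omega) l' (by omega)).1.2.2.2]
          exact (IH (l'+1) (by omega)).1
        · rw [← (key (i+1) hi l' (by omega)).2.2.1, (key i (by omega) l' (by omega)).2.2.2.2]
          exact (IH (l'+1) (by omega)).2
  have uvZ : ∀ i, i ≤ K+1 → ∀ j, j < K+1 → uv i (j+1) = 0 ∧ vv i (j+1) = 0 := by
    intro i hi j hj
    cases i with
    | zero => exact ⟨hb1 j hj, hb3 j hj⟩
    | succ i' =>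
      constructor
      · rw [(key i' (by omega) j hj).1.2.2.2]; exact (uhZ i' (by omega) (j+1) (by omega)).1
      · rw [(key i' (by omega) j hj).2.2.2.2]; exact (uhZ i' (by omega) (j+1) (by omega)).2
  -- pressure is constant
  have pstep : ∀ i j, i < K → j < K+1 → p (i+1+1) (j+1) = p (i+1) (j+1) := by
    intro i j hi hj
    have H := momVu i j hi hj
    have z1 := (uhZ (i+1) (by omega) j (by omega)).1
    have z2 := (uhZ (i+1) (by omega) (j+1) (by omega)).1
    have z3 := (uhZ i (by omega) j (by omega)).1
    have z4 := (uhZ i (by omega) (j+1) (by omega)).1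
    have z5 := (uvZ (i+1) (by omega) j hj).1
    have hΔ : h * (p (i+1+1) (j+1) - p (i+1) (j+1)) = 0 := by
      rw [z1, z2, z3, z4] at H; rw [z5] at H; linarith
    have := (mul_eq_zero.mp hΔ).resolve_left hne
    linarith
  have pstep2 : ∀ i j, i < K+1 → j < K → p (i+1) (j+1+1) = p (i+1) (j+1) := by
    intro i j hi hj
    have H := momHv i j hi hj
    have z1 := (uvZ i (by omega) (j+1) (by omega)).2
    have z2 := (uvZ i (by omega) j (by omega)).2
    have z3 := (uvZ (i+1) (by omega) (j+1) (by omega)).2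
    have z4 := (uvZ (i+1) (by omega) j (by omega)).2
    have z5 := (uhZ i (by omega) (j+1) (by omega)).2
    have hΔ : h * (p (i+1) (j+1+1) - p (i+1) (j+1)) = 0 := by
      rw [z1, z2, z3, z4] at H; rw [z5] at H; linarith
    have := (mul_eq_zero.mp hΔ).resolve_left hne
    linarith
  have pcol : ∀ i, i < K+1 → ∀ j, j < K+1 → p (i+1) (j+1) = p 1 (j+1) := by
    intro i
    induction i with
    | zero => intro _ j _; rfl
    | succ i ih =>
      intro hi j hj
      rw [pstep i j (by omega) hj]
      exact ih (by omega) j hj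
  have prow : ∀ j, j < K+1 → p 1 (j+1) = p 1 1 := by
    intro j
    induction j with
    | zero => intro _; rfl
    | succ j ih =>
      intro hj
      have := pstep2 0 j (by omega) (by omega)
      rw [show p (0+1) (j+1+1) = p 1 (j+1+1) from rfl, show p (0+1) (j+1) = p 1 (j+1) from rfl] at this
      rw [this]
      exact ih (by omega)
  have pall : ∀ i, i < K+1 → ∀ j, j < K+1 → p (i+1) (j+1) = p 1 1 := by
    intro i hi j hj
    rw [pcol i hi j hj]
    exact prow j hj
  have hp11 : p 1 1 = 0 := by
    have e : ∑ i ∈ Finset.Icc 1 (K+1), ∑ j ∈ Finset.Icc 1 (K+1), p i j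
        = ∑ i ∈ Finset.Icc 1 (K+1), ∑ j ∈ Finset.Icc 1 (K+1), p 1 1 := by
      refine Finset.sum_congr rfl fun i hi => Finset.sum_congr rfl fun j hj => ?_
      simp only [Finset.mem_Icc] at hi hj
      obtain ⟨i', rfl⟩ : ∃ i', i = i'+1 := ⟨i-1, by omega⟩
      obtain ⟨j', rfl⟩ : ∃ j', j = j'+1 := ⟨j-1, by omega⟩
      exact pall i' (by omega) j' (by omega)
    rw [e] at hmean
    simp only [Finset.sum_const, Nat.card_Icc, Nat.add_sub_cancel, nsmul_eq_mul] at hmean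
    have hKK : ((K+1 : ℕ) : ℝ) ≠ 0 := Nat.cast_ne_zero.mpr (by omega)
    have := (mul_eq_zero.mp hmean).resolve_left hKK
    exact (mul_eq_zero.mp this).resolve_left hKK
  refine ⟨?_, ?_, ?_⟩
  · intro i j hi hj1 hjn
    obtain ⟨j', rfl⟩ : ∃ j', j = j'+1 := ⟨j-1, by omega⟩
    exact uvZ i hi j' (by omega)
  · intro i j hi1 hin hj
    obtain ⟨i', rfl⟩ : ∃ i', i = i'+1 := ⟨i-1, by omega⟩
    exact uhZ i' (by omega) j hj
  · intro i j hi1 hin hj1 hjn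
    obtain ⟨i', rfl⟩ : ∃ i', i = i'+1 := ⟨i-1, by omega⟩
    obtain ⟨j', rfl⟩ : ∃ j', j = j'+1 := ⟨j-1, by omega⟩
    rw [pall i' (by omega) j' (by omega), hp11]
end
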